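/- Let T > 0 and Δ > 0, and set Δv = Δ·T and Δx = (1/2)·Δ·T². If x ∈ Δx·ℤ, v ∈ Δv·ℤ and a ∈ Δ·ℤ (i.e. x, v, a are integer multiples of Δx, Δv, Δ respectively), then x + v·T + (1/2)·a·T² ∈ Δx·ℤ and v + a·T ∈ Δv·ℤ. -/
import Mathlib

/-- The discretization Δa = Δ, Δv = Δ·T, Δx = (1/2)·Δ·T² is closed under the
discrete-time state equations of the GLOSA problem. -/
theorem stmt_1 (T Δ x v a : ℝ) (hT : 0 < T) (hΔ : 0 < Δ)
    (hx : ∃ n : ℤ, x = ((1 / 2) * Δ * T ^ 2) * n)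
    (hv : ∃ n : ℤ, v = (Δ * T) * n)
    (ha : ∃ n : ℤ, a = Δ * n) :
    (∃ n : ℤ, x + v * T + (1 / 2) * a * T ^ 2 = ((1 / 2) * Δ * T ^ 2) * n) ∧
      (∃ n : ℤ, v + a * T = (Δ * T) * n) := by
  obtain ⟨nx, hx⟩ := hx
  obtain ⟨nv, hv⟩ := hv
  obtain ⟨na, ha⟩ := ha
  subst hx hv ha
  refine ⟨⟨nx + 2 * nv + na, ?_⟩, ⟨nv + na, ?_⟩⟩ <;> push_cast <;> ring
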